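/- Let M = [a,b) and N = [c,d) be interval modules (0 ≤ a < b, 0 ≤ c < d). Define σ' = sup S_{M,N} if S_{M,N} ≠ ∅ and σ' = 0 otherwise, and τ' = sup S_{N,M} if S_{N,M} ≠ ∅ and τ' = 0 otherwise. Then max{|a−d|, |b−c|} = max{σ', τ'}; that is, max{|a−d|,|b−c|} is the parameter value at which the last homomorphism between M and N dies. -/

import Mathlib

open scoped NNReal

/-- A persistence module: a functor from `[0,∞)` to real vector spaces. -/
structure PM where
  V : ℝ≥0 → Type
  [grp : ∀ x, AddCommGroup (V x)]
  [mod : ∀ x, Module ℝ (V x)]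
  map : ∀ {x y : ℝ≥0}, x ≤ y → (V x →ₗ[ℝ] V y)
  map_id : ∀ x : ℝ≥0, map (le_refl x) = LinearMap.id
  map_comp : ∀ {x y z : ℝ≥0} (h1 : x ≤ y) (h2 : y ≤ z),
    (map h2).comp (map h1) = map (h1.trans h2)

attribute [instance] PM.grp PM.mod

/-- A morphism of persistence modules. -/
structure PM.Hom (M N : PM) where
  app : ∀ x : ℝ≥0, M.V x →ₗ[ℝ] N.V x
  comm : ∀ {x y : ℝ≥0} (h : x ≤ y), (app y).comp (M.map h) = (N.map h).comp (app x)

/-- The shifted module `M·ε`. -/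
def PM.shift (M : PM) (ε : ℝ≥0) : PM where
  V x := M.V (x + ε)
  grp x := inferInstance
  mod x := inferInstance
  map h := M.map (add_le_add h (le_refl ε))
  map_id x := M.map_id (x + ε)
  map_comp h1 h2 := M.map_comp _ _

noncomputable def intervalSub (α β : ℝ) (x : ℝ≥0) : Submodule ℝ ℝ :=
  if α ≤ (x : ℝ) ∧ (x : ℝ) < β then ⊤ else ⊥

/-- The interval module `[α,β)`. -/
noncomputable def intervalModule (α β : ℝ) : PM where
  V x := ↥(intervalSub α β x)
  grp x := inferInstance
  mod x := inferInstance
  map {x y} h := LinearMap.codRestrict _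
      ((if α ≤ (x : ℝ) ∧ (y : ℝ) < β then (1 : ℝ) else 0) • (intervalSub α β x).subtype)
      (by
        intro v
        by_cases hy : α ≤ (y : ℝ) ∧ (y : ℝ) < β
        · simp [intervalSub, hy]
        · have hc : ¬(α ≤ (x : ℝ) ∧ (y : ℝ) < β) := by
            intro hc
            exact hy ⟨le_trans hc.1 (by exact_mod_cast h), hc.2⟩
          rw [if_neg hc, zero_smul]
          exact Submodule.zero_mem _)
  map_id x := by
    ext v
    by_cases hx : α ≤ (x : ℝ) ∧ (x : ℝ) < β
    · simp [hx]
    · have hv : (v : ℝ) = 0 := by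
        have h2 := v.2
        simp only [intervalSub, if_neg hx, Submodule.mem_bot] at h2
        exact h2
      simp [hx, hv]
  map_comp {x y z} h1 h2 := by
    ext v
    by_cases hC : α ≤ (x : ℝ) ∧ (z : ℝ) < β
    · have hA : α ≤ (x : ℝ) ∧ (y : ℝ) < β :=
        ⟨hC.1, lt_of_le_of_lt (by exact_mod_cast h2) hC.2⟩
      have hB : α ≤ (y : ℝ) ∧ (z : ℝ) < β :=
        ⟨le_trans hC.1 (by exact_mod_cast h1), hC.2⟩
      simp [hA, hB, hC]
    · rcases not_and_or.mp hC with hx | hz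
      · have hA : ¬(α ≤ (x : ℝ) ∧ (y : ℝ) < β) := fun h => hx h.1
        simp [hA, hC]
        split_ifs <;> simp
      · have hB : ¬(α ≤ (y : ℝ) ∧ (z : ℝ) < β) := fun h => hz h.2
        simp [hB, hC]

/-- `Hom(M,N) ≠ {0}`: there is a nonzero morphism from `M` to `N`. -/
def HomNeZero (M N : PM) : Prop := ∃ F : PM.Hom M N, ∃ x, F.app x ≠ 0

/-- `S_{M,N} = {x ≥ 0 : Hom(M, N·x) ≠ {0}}`. -/
noncomputable def Sset (M N : PM) : Set ℝ :=
  {x : ℝ | 0 ≤ x ∧ HomNeZero M (N.shift x.toNNReal)}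

/-- The canonical morphism `Π_M^{M·τ} : M → M·τ`. -/
def PM.pi (M : PM) (τ : ℝ≥0) : M.Hom (M.shift τ) where
  app x := M.map le_self_add
  comm {x y} h := by
    show (M.map le_self_add).comp (M.map h) =
      (M.map (add_le_add h (le_refl τ))).comp (M.map le_self_add)
    rw [M.map_comp, M.map_comp]

/-- The pair `(Φ, Ψ)` is an `ε`-interleaving between `M` and `N`:
`(Ψ·ε) ∘ Φ = Π_M^{M·2ε}` and `(Φ·ε) ∘ Ψ = Π_N^{N·2ε}` (expressed pointwise). -/
def IsInterleaving (M N : PM) (ε : ℝ≥0)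
    (Φ : M.Hom (N.shift ε)) (Ψ : N.Hom (M.shift ε)) : Prop :=
  (∀ x : ℝ≥0, (Ψ.app (x + ε)).comp (Φ.app x) =
      M.map (le_self_add.trans le_self_add : x ≤ x + ε + ε)) ∧
  (∀ x : ℝ≥0, (Φ.app (x + ε)).comp (Ψ.app x) =
      N.map (le_self_add.trans le_self_add : x ≤ x + ε + ε))

/-!
A nonzero morphism `[a, b) → [c, d)·t` exists iff `c ≤ a + t < d ≤ b + t`; it is then the
identity where both modules are nonzero. Conversely, if `a + t < c` a morphism vanishes at `a`,
hence on all of `[a, b)`, because the structure maps of `[a, b)` out of `a` are onto; if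
`b + t < d` it vanishes at `b`, hence before `b`, because the structure maps of the target are
injective there. So `S_{M,N} = [max(0, c - a, d - b), d - a)`, giving `σ' = max(d - a, 0)` and
likewise `τ' = max(b - c, 0)`; as `a - d < b - c` and `c - b < d - a`, their maximum is
`max(|a - d|, |b - c|)`.
-/

open Set

namespace PM.Hom

variable {M N : PM} (F : M.Hom N) {x y : ℝ≥0} (h : x ≤ y)

theorem app_eq_zero_of_surjective (hM : Function.Surjective (M.map h)) (hx : F.app x = 0) :
    F.app y = 0 := by
  ext v
  obtain ⟨u, rfl⟩ := hM v
  simpa [hx] using LinearMap.congr_fun (F.comm h) u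

theorem app_eq_zero_of_injective (hN : Function.Injective (N.map h)) (hy : F.app y = 0) :
    F.app x = 0 := by
  ext u
  apply hN
  simpa [hy] using (LinearMap.congr_fun (F.comm h) u).symm

end PM.Hom

section IntervalModule

variable {α β : ℝ} {x y : ℝ≥0}

theorem mem_intervalSub {r : ℝ} : r ∈ intervalSub α β x ↔ (α ≤ x ∧ x < β) ∨ r = 0 := by
  unfold intervalSub
  split_ifs with hx <;> simp [hx]

theorem intervalModule_eq_zero_of_notMem (hx : ¬(α ≤ x ∧ x < β))
    (v : (intervalModule α β).V x) : v = 0 :=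
  Subtype.ext ((mem_intervalSub.1 v.2).resolve_left hx)

@[simp]
theorem intervalModule_map_coe (h : x ≤ y) (v : intervalSub α β x) :
    ((intervalModule α β).map h v).val = (if α ≤ x ∧ y < β then 1 else 0) * v :=
  rfl

theorem intervalModule_map_bijective (h : x ≤ y) (hx : α ≤ x) (hy : y < β) :
    Function.Bijective ((intervalModule α β).map h) := by
  have hmap : ∀ v : intervalSub α β x, ((intervalModule α β).map h v).val = v := by
    simp [hx, hy]
  refine ⟨fun v w hvw => Subtype.ext ?_, fun w => ?_⟩
  · rw [← hmap v, ← hmap w]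
    exact congrArg Subtype.val hvw
  · obtain ⟨w, -⟩ : intervalSub α β y := w
    have hw : w ∈ intervalSub α β x :=
      mem_intervalSub.2 (.inl ⟨hx, (NNReal.coe_le_coe.2 h).trans_lt hy⟩)
    exact ⟨⟨w, hw⟩, Subtype.ext (hmap _)⟩

end IntervalModule

noncomputable def intervalModuleShiftHom (a b c d : ℝ) (t : ℝ≥0) (hca : c ≤ a + t)
    (hdb : d ≤ b + t) : (intervalModule a b).Hom ((intervalModule c d).shift t) where
  app x := LinearMap.codRestrict (intervalSub c d (x + t))
    ((if a ≤ x ∧ x + t < d then (1 : ℝ) else 0) • (intervalSub a b x).subtype) fun v => by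
      rw [mem_intervalSub]
      split_ifs with hx
      · exact .inl ⟨by push_cast; linarith, by push_cast; exact hx.2⟩
      · rw [zero_smul]
        exact .inr rfl
  comm {x y} h := by
    ext ⟨v, hv⟩
    rw [mem_intervalSub] at hv
    apply Subtype.ext
    show (if a ≤ y ∧ y + t < d then 1 else 0) * ((if a ≤ x ∧ y < b then 1 else 0) * v)
      = (if c ≤ ↑(x + t) ∧ ↑(y + t) < d then 1 else 0) * ((if a ≤ x ∧ x + t < d then 1 else 0) * v)
    have hxy : (x : ℝ) ≤ y := h
    push_cast
    grind

section IntervalModuleShift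

variable {a b c d : ℝ} {t : ℝ≥0}

theorem intervalModuleShiftHom_app_coe (hca : c ≤ a + t) (hdb : d ≤ b + t) (x : ℝ≥0)
    (v : intervalSub a b x) :
    ((intervalModuleShiftHom a b c d t hca hdb).app x v).val
      = (if a ≤ x ∧ x + t < d then 1 else 0) * v :=
  rfl

theorem homNeZero_intervalModule_shift (ha : 0 ≤ a) (hab : a < b) (hca : c ≤ a + t)
    (had : a + t < d) (hdb : d ≤ b + t) :
    HomNeZero (intervalModule a b) ((intervalModule c d).shift t) := by
  lift a to ℝ≥0 using ha
  refine ⟨intervalModuleShiftHom a b c d t hca hdb, a, fun h0 => ?_⟩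
  have h1 : (1 : ℝ) ∈ intervalSub a b a := mem_intervalSub.2 (.inl ⟨le_rfl, hab⟩)
  have h := intervalModuleShiftHom_app_coe hca hdb a ⟨1, h1⟩
  rw [h0, if_pos ⟨le_rfl, had⟩, one_mul] at h
  exact zero_ne_one h

theorem le_of_homNeZero_intervalModule_shift (ha : 0 ≤ a)
    (hF : HomNeZero (intervalModule a b) ((intervalModule c d).shift t)) :
    c ≤ a + t ∧ a + t < d ∧ d ≤ b + t := by
  obtain ⟨F, x, hFx⟩ := hF
  have hsrc : a ≤ x ∧ x < b := by
    by_contra hx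
    exact hFx (LinearMap.ext fun v => by
      rw [intervalModule_eq_zero_of_notMem hx v, map_zero]; rfl)
  have htgt : c ≤ x + t ∧ x + t < d := by
    by_contra hx
    exact hFx (LinearMap.ext fun v =>
      intervalModule_eq_zero_of_notMem (x := x + t) (by push_cast; exact hx) _)
  lift a to ℝ≥0 using ha
  lift b to ℝ≥0 using (a.2.trans hsrc.1).trans hsrc.2.le
  refine ⟨?_, by linarith, ?_⟩
  · by_contra hlt
    have hax : a ≤ x := hsrc.1
    have hzero : F.app a = 0 := LinearMap.ext fun v =>
      intervalModule_eq_zero_of_notMem (x := a + t) (by push_cast; intro h; linarith [h.1]) _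
    exact hFx (F.app_eq_zero_of_surjective hax
      (intervalModule_map_bijective hax le_rfl hsrc.2).2 hzero)
  · by_contra hlt
    have hxb : x ≤ b := hsrc.2.le
    have hzero : F.app b = 0 := LinearMap.ext fun v => by
      rw [intervalModule_eq_zero_of_notMem (fun h => lt_irrefl _ h.2) v, map_zero]; rfl
    exact hFx (F.app_eq_zero_of_injective hxb
      (intervalModule_map_bijective (add_le_add hxb le_rfl) (by push_cast; exact htgt.1)
        (by push_cast; linarith)).1 hzero)

theorem homNeZero_intervalModule_shift_iff (ha : 0 ≤ a) (hab : a < b) (t : ℝ≥0) :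
    HomNeZero (intervalModule a b) ((intervalModule c d).shift t) ↔
      c ≤ a + t ∧ a + t < d ∧ d ≤ b + t :=
  ⟨le_of_homNeZero_intervalModule_shift ha,
    fun ⟨hca, had, hdb⟩ => homNeZero_intervalModule_shift ha hab hca had hdb⟩

theorem Sset_intervalModule (ha : 0 ≤ a) (hab : a < b) :
    Sset (intervalModule a b) (intervalModule c d) =
      Ico (max (max 0 (c - a)) (d - b)) (d - a) := by
  ext x
  simp only [Sset, mem_ofPred_eq, mem_Ico, max_le_iff]
  constructor
  · rintro ⟨hx, hF⟩
    rw [homNeZero_intervalModule_shift_iff ha hab, Real.coe_toNNReal x hx] at hF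
    exact ⟨⟨⟨hx, by linarith⟩, by linarith⟩, by linarith⟩
  · rintro ⟨⟨⟨hx, hca⟩, hdb⟩, had⟩
    refine ⟨hx, (homNeZero_intervalModule_shift_iff ha hab _).2 ?_⟩
    rw [Real.coe_toNNReal x hx]
    exact ⟨by linarith, by linarith, by linarith⟩

end IntervalModuleShift

theorem eq_max_zero_of_isLUB_Ico {p q σ : ℝ} (hp : 0 ≤ p) (hpq : 0 < q → p < q)
    (hσ : (Ico p q).Nonempty → IsLUB (Ico p q) σ) (hσ₀ : ¬(Ico p q).Nonempty → σ = 0) :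
    σ = max q 0 := by
  by_cases hq : 0 < q
  · rw [max_eq_left hq.le]
    exact (hσ (nonempty_Ico.2 (hpq hq))).unique (isLUB_Ico (hpq hq))
  · rw [max_eq_right (not_lt.1 hq)]
    exact hσ₀ (by rw [nonempty_Ico]; linarith)

theorem eq_max_zero_of_Sset_intervalModule {a b c d σ : ℝ} (ha : 0 ≤ a) (hab : a < b)
    (hcd : c < d)
    (hσ : (Sset (intervalModule a b) (intervalModule c d)).Nonempty →
      IsLUB (Sset (intervalModule a b) (intervalModule c d)) σ)
    (hσ₀ : ¬(Sset (intervalModule a b) (intervalModule c d)).Nonempty → σ = 0) :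
    σ = max (d - a) 0 := by
  rw [Sset_intervalModule ha hab] at hσ hσ₀
  refine eq_max_zero_of_isLUB_Ico (le_max_of_le_left (le_max_left _ _)) (fun h => ?_) hσ hσ₀
  simp only [max_lt_iff]
  exact ⟨⟨h, by linarith⟩, by linarith⟩

theorem stmt4 (a b c d σ' τ' : ℝ) (ha : 0 ≤ a) (hab : a < b) (hc : 0 ≤ c) (hcd : c < d)
    (hσ1 : (Sset (intervalModule a b) (intervalModule c d)).Nonempty → IsLUB (Sset (intervalModule a b) (intervalModule c d)) σ')
    (hσ2 : ¬ (Sset (intervalModule a b) (intervalModule c d)).Nonempty → σ' = 0)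
    (hτ1 : (Sset (intervalModule c d) (intervalModule a b)).Nonempty → IsLUB (Sset (intervalModule c d) (intervalModule a b)) τ')
    (hτ2 : ¬ (Sset (intervalModule c d) (intervalModule a b)).Nonempty → τ' = 0) :
    max |a - d| |b - c| = max σ' τ' := by
  rw [eq_max_zero_of_Sset_intervalModule ha hab hcd hσ1 hσ2,
    eq_max_zero_of_Sset_intervalModule hc hcd hab hτ1 hτ2]
  grind
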